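/- arXiv:2401.07069 — 3 statements merged into one kernel-verified Lean document; each statement's English description precedes it below -/
import Mathlib

section
/- Let S = S₁ ∪ S₂ ⊆ U_{6n} ∖ {1} with 1 ∉ S = S^{−1}, where every element of S₁ is even and every element of S₂ is odd. Then Cay(U_{6n}, S) is integral if and only if the following hold for all 0 ≤ j ≤ 2n−1 and 0 ≤ k ≤ n−1: (1) χ_j(S), ψ_k(S₁) and ψ_k(S₁²) + ψ_k(S₂²) are integers; and (2) Δ_{ψ_k}(S) = 2(ψ_k(S₁²) + ψ_k(S₂²)) − ψ_k(S₁)² is a perfect square. -/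
open Complex SemidirectProduct Polynomial
open scoped Pointwise

namespace U6nPaper

/-- The inversion automorphism of `Multiplicative (ZMod 3)`. -/
def iota : MulAut (Multiplicative (ZMod 3)) :=
  { toFun := fun x => x⁻¹
    invFun := fun x => x⁻¹
    left_inv := fun x => inv_inv x
    right_inv := fun x => inv_inv x
    map_mul' := fun x y => mul_inv x y }

lemma iota_sq : iota ^ 2 = 1 := by
  ext x
  simp [sq, iota]

/-- The homomorphism `ZMod 2 → Aut(ZMod 3)` sending `1` to inversion. -/
def sgn2 : Multiplicative (ZMod 2) →* MulAut (Multiplicative (ZMod 3)) where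
  toFun x := iota ^ (Multiplicative.toAdd x).val
  map_one' := by simp
  map_mul' x y := by
    simp only [toAdd_mul, ZMod.val_add, ← pow_eq_pow_mod _ iota_sq, pow_add]

/-- The action of `ZMod (2n)` on `ZMod 3` where `r` acts by multiplication by `(-1)^r`. -/
def phi (n : ℕ) : Multiplicative (ZMod (2 * n)) →* MulAut (Multiplicative (ZMod 3)) :=
  sgn2.comp (AddMonoidHom.toMultiplicative
    ((ZMod.castHom ⟨n, rfl⟩ (ZMod 2)).toAddMonoidHom))

/-- The group `U_{6n} = ⟨a, b ∣ a^{2n} = b³ = 1, a⁻¹ba = b⁻¹⟩`, realized as the semidirect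
product `ZMod 3 ⋊ ZMod (2n)`. -/
abbrev U6n (n : ℕ) := Multiplicative (ZMod 3) ⋊[phi n] Multiplicative (ZMod (2 * n))

/-- The generator `a` of `U_{6n}` (of order `2n`). -/
def aU (n : ℕ) : U6n n := inr (Multiplicative.ofAdd (1 : ZMod (2 * n)))

/-- The generator `b` of `U_{6n}` (of order `3`). -/
def bU (n : ℕ) : U6n n := inl (Multiplicative.ofAdd (1 : ZMod 3))

def u6nEquiv (n : ℕ) : U6n n ≃ ZMod 3 × ZMod (2 * n) where
  toFun g := (Multiplicative.toAdd g.left, Multiplicative.toAdd g.right)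
  invFun p := ⟨Multiplicative.ofAdd p.1, Multiplicative.ofAdd p.2⟩
  left_inv g := rfl
  right_inv p := rfl

instance (n : ℕ) [NeZero n] : Fintype (U6n n) :=
  haveI : NeZero (2 * n) := ⟨by have := NeZero.ne n; omega⟩
  Fintype.ofEquiv _ (u6nEquiv n).symm

/-- An element `a^r b^t` of `U_{6n}` (with `0 ≤ r < 2n`) is even if `r` is even. -/
def IsEvenElt {n : ℕ} (g : U6n n) : Prop := Even (Multiplicative.toAdd g.right).val

/-- The Cayley graph of a group `G` with connection set `S`: `g` and `h` are adjacent
iff `h * g⁻¹ ∈ S` (as a simple graph; for `1 ∉ S = S⁻¹` this is the usual notion). -/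
def cayleyGraph {G : Type*} [Group G] (S : Set G) : SimpleGraph G :=
  SimpleGraph.fromRel (fun g h => h * g⁻¹ ∈ S)

open scoped Classical in
/-- The adjacency matrix of a simple graph, over `ℂ`. -/
noncomputable def adjMat {V : Type*} (Γ : SimpleGraph V) : Matrix V V ℂ :=
  fun g h => if Γ.Adj g h then 1 else 0

/-- A simple graph is integral if every eigenvalue of its adjacency matrix is an integer. -/
def IsIntegral {V : Type*} [Fintype V] [DecidableEq V] (Γ : SimpleGraph V) : Prop :=
  ∀ z ∈ spectrum ℂ (adjMat Γ), ∃ m : ℤ, z = (m : ℂ)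

/-- The root of unity `ω = exp(πi/n)`. -/
noncomputable def om (n : ℕ) : ℂ := Complex.exp (Real.pi * Complex.I / n)

/-- The linear character `χ_j` of `U_{6n}`: `χ_j(a^r b^t) = ω^{jr}`. -/
noncomputable def chi (n j : ℕ) (g : U6n n) : ℂ :=
  om n ^ (j * (Multiplicative.toAdd g.right).val)

/-- The degree-two character `ψ_k` of `U_{6n}`: `ψ_k(a^r b^t)` equals `2ω^{kr}` if `r` is even
and `t = 0`, `-ω^{kr}` if `r` is even and `t ∈ {1,2}`, and `0` if `r` is odd. -/
noncomputable def psi (n k : ℕ) (g : U6n n) : ℂ :=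
  if Even (Multiplicative.toAdd g.right).val then
    (if g.left = 1 then 2 else -1) * om n ^ (k * (Multiplicative.toAdd g.right).val)
  else 0

/-- `f(A) = ∑_{s ∈ A} f(s)`. -/
noncomputable def fsum {α : Type*} (f : α → ℂ) (A : Finset α) : ℂ := ∑ s ∈ A, f s

/-- `f(A²) = ∑_{s,t ∈ A} f(s·t)`. -/
noncomputable def fsum2 {α : Type*} [Mul α] (f : α → ℂ) (A : Finset α) : ℂ :=
  ∑ s ∈ A, ∑ t ∈ A, f (s * t)

/-- The Boolean algebra `B(H)` of a group `H`: the smallest family of subsets of `H`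
containing all subgroups and closed under complements, unions and intersections.
`InBoolAlg H s` says `s ∈ B(H)`. -/
inductive InBoolAlg (H : Type*) [Group H] : Set H → Prop where
  | subgroup (K : Subgroup H) : InBoolAlg H (K : Set H)
  | compl {s : Set H} : InBoolAlg H s → InBoolAlg H sᶜ
  | union {s t : Set H} : InBoolAlg H s → InBoolAlg H t → InBoolAlg H (s ∪ t)
  | inter {s t : Set H} : InBoolAlg H s → InBoolAlg H t → InBoolAlg H (s ∩ t)

/-!
The adjacency matrix `A` of `Cay(U_{6n}, S)` acts on a linear character `χ` as the scalar
`χ(S)`, and on the matrix coefficients of a representation `ρ` through `ρ(S) = ∑_{s ∈ S} ρ(s)`;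
hence every `χ_j(S)` and every eigenvalue of `ρ_k(S)` lies in the spectrum of `A`. Conversely,
if `A v = z v` then the Fourier transforms `v̂(ρ) = ∑_g v(g) ρ(g)` satisfy `ρ(S) v̂(ρ) = z v̂(ρ)`,
and they cannot all vanish for `v ≠ 0`, by the inversion formula `∑ⱼ χⱼ + 2 ∑ₖ ψₖ = 6n · δ₁`
(`ψ_k` being the trace of `ρ_k`). So the spectrum consists of the `χ_j(S)` and the eigenvalues
of the `2 × 2` matrices `ρ_k(S)`. As `ψ_k` vanishes on odd elements, `tr ρ_k(S) = ψ_k(S₁)` and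
`tr ρ_k(S)² = ψ_k(S₁²) + ψ_k(S₂²)`; and the eigenvalues `λ, μ` of a `2 × 2` matrix are integers
iff `λ + μ` and `λ² + μ²` are integers and `(λ - μ)² = 2(λ² + μ²) - (λ + μ)²` is the square of
an integer.
-/

section Spectrum

open Matrix

lemma mem_spectrum_of_mul_eq_smul {𝕜 A : Type*} [CommSemiring 𝕜] [Ring A] [Algebra 𝕜 A]
    {a x : A} {z : 𝕜} (hx : x ≠ 0) (h : a * x = z • x) : z ∈ spectrum 𝕜 a := by
  refine spectrum.mem_iff.mpr fun hu => hx ((hu.mul_right_eq_zero).mp ?_)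
  rw [sub_mul, Algebra.algebraMap_eq_smul_one, smul_one_mul, h, sub_self]

variable {ι K : Type*} [Fintype ι] [DecidableEq ι] [Field K]

lemma mem_spectrum_iff_exists_mulVec_eq_smul {M : Matrix ι ι K} {z : K} :
    z ∈ spectrum K M ↔ ∃ v ≠ 0, M *ᵥ v = z • v := by
  rw [spectrum.mem_iff, isUnit_iff_isUnit_det, isUnit_iff_ne_zero, not_not,
    ← exists_mulVec_eq_zero_iff]
  simp only [sub_mulVec, Algebra.algebraMap_eq_smul_one, smul_mulVec, one_mulVec, sub_eq_zero,
    eq_comm]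

lemma mem_spectrum_iff_exists_vecMul_eq_smul {M : Matrix ι ι K} {z : K} :
    z ∈ spectrum K M ↔ ∃ v ≠ 0, v ᵥ* M = z • v := by
  rw [spectrum.mem_iff, isUnit_iff_isUnit_det, isUnit_iff_ne_zero, not_not,
    ← exists_vecMul_eq_zero_iff]
  simp only [vecMul_sub, Algebra.algebraMap_eq_smul_one, vecMul_smul, vecMul_one, sub_eq_zero,
    eq_comm]

end Spectrum

section IntegralRoots

open Matrix Polynomial

lemma forall_roots_int_iff (t d : ℂ) :
    (∀ z : ℂ, z ^ 2 - t * z + d = 0 → ∃ m : ℤ, z = m) ↔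
      (∃ m : ℤ, t = m) ∧ (∃ m : ℤ, t ^ 2 - 2 * d = m) ∧
        ∃ m : ℤ, 2 * (t ^ 2 - 2 * d) - t ^ 2 = m ^ 2 := by
  constructor
  · intro h
    obtain ⟨e, he⟩ := IsAlgClosed.exists_pow_nat_eq (t ^ 2 - 4 * d) two_pos
    obtain ⟨m₁, hm₁⟩ := h ((t + e) / 2) (by linear_combination he / 4)
    obtain ⟨m₂, hm₂⟩ := h ((t - e) / 2) (by linear_combination he / 4)
    obtain rfl : t = m₁ + m₂ := by linear_combination hm₁ + hm₂
    obtain rfl : e = m₁ - m₂ := by linear_combination hm₁ - hm₂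
    obtain rfl : d = m₁ * m₂ := by linear_combination he / 4
    exact ⟨⟨m₁ + m₂, by push_cast; ring⟩, ⟨m₁ ^ 2 + m₂ ^ 2, by push_cast; ring⟩,
      ⟨m₁ - m₂, by push_cast; ring⟩⟩
  · rintro ⟨⟨a, rfl⟩, ⟨b, hb⟩, ⟨c, hc⟩⟩ z hz
    have hsq : (2 * z - a) ^ 2 = (c : ℂ) ^ 2 := by linear_combination 4 * hz + hc
    -- so `2z = a ± c`, and `a ± c` is even because `a² + c² = 2b`
    have hac : a ^ 2 + c ^ 2 = 2 * b := by
      exact_mod_cast (by linear_combination -hc + 2 * hb : (a : ℂ) ^ 2 + c ^ 2 = 2 * b)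
    obtain ⟨w, hw⟩ : Even (a + c) :=
      (Int.even_pow.mp (⟨b + a * c, by linear_combination hac⟩ : Even ((a + c) ^ 2))).1
    have hw' : (a : ℂ) + c = w + w := by exact_mod_cast hw
    rcases sq_eq_sq_iff_eq_or_eq_neg.mp hsq with h | h
    · exact ⟨w, by linear_combination h / 2 + hw' / 2⟩
    · exact ⟨w - c, by push_cast; linear_combination h / 2 + hw' / 2⟩

lemma forall_mem_spectrum_int_iff_fin_two (M : Matrix (Fin 2) (Fin 2) ℂ) :
    (∀ z ∈ spectrum ℂ M, ∃ m : ℤ, z = m) ↔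
      (∃ m : ℤ, trace M = m) ∧ (∃ m : ℤ, trace (M * M) = m) ∧
        ∃ m : ℤ, 2 * trace (M * M) - trace M ^ 2 = m ^ 2 := by
  have htr : trace (M * M) = trace M ^ 2 - 2 * M.det := by
    simp only [trace_fin_two, det_fin_two, mul_apply, Fin.sum_univ_two]
    ring
  simp only [mem_spectrum_iff_isRoot_charpoly, charpoly_fin_two, IsRoot, eval_add, eval_sub,
    eval_mul, eval_pow, eval_X, eval_C, htr]
  exact forall_roots_int_iff _ _

end IntegralRoots

section CayleyGraph

open Matrix

variable {G : Type*} [Group G] [Fintype G] [DecidableEq G] {S : Finset G}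

lemma adjMat_cayleyGraph_mulVec (h1 : (1 : G) ∉ S) (hinv : S⁻¹ = S) (f : G → ℂ) :
    adjMat (cayleyGraph (S : Set G)) *ᵥ f = fun g => ∑ s ∈ S, f (s * g) := by
  have adj (g h : G) : (cayleyGraph (S : Set G)).Adj g h ↔ h * g⁻¹ ∈ S := by
    rw [cayleyGraph, SimpleGraph.fromRel_adj]
    refine ⟨fun ⟨_, hgh⟩ => hgh.elim id fun hhg => ?_, fun hgh => ⟨?_, Or.inl hgh⟩⟩
    · simpa [hinv] using Finset.inv_mem_inv hhg
    · rintro rfl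
      exact h1 (by simpa using hgh)
  ext g
  simp only [mulVec, dotProduct, adjMat, adj, ite_mul, one_mul, zero_mul]
  rw [← Equiv.sum_comp (Equiv.mulRight g), ← Finset.sum_filter]
  simp

lemma mem_spectrum_adjMat_of_monoidHom (h1 : (1 : G) ∉ S) (hinv : S⁻¹ = S) (χ : G →* ℂ) :
    ∑ s ∈ S, χ s ∈ spectrum ℂ (adjMat (cayleyGraph (S : Set G))) := by
  refine mem_spectrum_iff_exists_mulVec_eq_smul.mpr ⟨χ, fun h => ?_, ?_⟩
  · simpa using congrFun h 1
  · ext g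
    simp [adjMat_cayleyGraph_mulVec h1 hinv, Finset.sum_mul]

lemma spectrum_subset_spectrum_adjMat (h1 : (1 : G) ∉ S) (hinv : S⁻¹ = S)
    {ι : Type*} [Fintype ι] [DecidableEq ι] (ρ : G →* Matrix ι ι ℂ) :
    spectrum ℂ (∑ s ∈ S, ρ s) ⊆ spectrum ℂ (adjMat (cayleyGraph (S : Set G))) := by
  intro z hz
  obtain ⟨u, hu, huz⟩ := mem_spectrum_iff_exists_vecMul_eq_smul.mp hz
  obtain ⟨i, hi⟩ := Function.ne_iff.mp hu
  refine mem_spectrum_iff_exists_mulVec_eq_smul.mpr ⟨fun g => (u ᵥ* ρ g) i, fun h => ?_, ?_⟩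
  · exact hi (by simpa using congrFun h 1)
  · ext g
    simp only [adjMat_cayleyGraph_mulVec h1 hinv, map_mul, ← vecMul_vecMul]
    rw [← Finset.sum_apply, ← sum_vecMul, ← vecMul_sum, huz, smul_vecMul]
    rfl

variable {R : Type*} [Ring R] [Algebra ℂ R]

def fourierHat (ρ : G →* R) (v : G → ℂ) : R := ∑ g, v g • ρ g

lemma sum_mul_fourierHat (h1 : (1 : G) ∉ S) (hinv : S⁻¹ = S) (ρ : G →* R) {v : G → ℂ} {z : ℂ}
    (hv : adjMat (cayleyGraph (S : Set G)) *ᵥ v = z • v) :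
    (∑ s ∈ S, ρ s) * fourierHat ρ v = z • fourierHat ρ v := by
  have hv' (g : G) : ∑ s ∈ S, v (s * g) = z * v g := by
    simpa [adjMat_cayleyGraph_mulVec h1 hinv] using congrFun hv g
  calc (∑ s ∈ S, ρ s) * fourierHat ρ v = ∑ s ∈ S, ∑ g, v g • ρ (s⁻¹ * g) := by
        rw [← hinv, Finset.sum_inv_index, hinv, Finset.sum_mul]
        simp only [fourierHat, Finset.mul_sum, mul_smul_comm, map_mul]
    _ = ∑ g, (∑ s ∈ S, v (s * g)) • ρ g := by
        simp only [Finset.sum_smul]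
        conv_rhs => rw [Finset.sum_comm]
        refine Finset.sum_congr rfl fun s _ => ?_
        rw [← Equiv.sum_comp (Equiv.mulLeft s)]
        simp
    _ = z • fourierHat ρ v := by
        simp only [hv', fourierHat, Finset.smul_sum, smul_smul]

end CayleyGraph

section Presentation

open Multiplicative

variable {n : ℕ} [NeZero n]

lemma phi_apply (r : Multiplicative (ZMod (2 * n))) (x : Multiplicative (ZMod 3)) :
    phi n r x = if Even (toAdd r).val then x else x⁻¹ := by
  have hphi : phi n r = iota ^ ((toAdd r).val % 2) := by
    simp only [phi, sgn2, MonoidHom.coe_comp, Function.comp_apply, MonoidHom.coe_mk,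
      OneHom.coe_mk]
    congr 1
    rw [AddMonoidHom.toMultiplicative_apply_apply, RingHom.toAddMonoidHom_eq_coe,
      AddMonoidHom.coe_coe, ZMod.castHom_apply, ZMod.cast_eq_val, toAdd_ofAdd, ZMod.val_natCast]
  rw [hphi]
  split_ifs with h
  · rw [Nat.even_iff.mp h, pow_zero]
    rfl
  · rw [Nat.odd_iff.mp (Nat.not_even_iff_odd.mp h), pow_one]
    rfl

lemma pow_val_add {M : Type*} [Monoid M] {m : ℕ} [NeZero m] {a : M} (ha : a ^ m = 1)
    (x y : ZMod m) : a ^ (x + y).val = a ^ x.val * a ^ y.val := by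
  rw [ZMod.val_add, ← pow_eq_pow_mod _ ha, pow_add]

variable {H : Type*} [Monoid H] {β α : H}

lemma semiconjBy_pow_val (hβ : β ^ 3 = 1) (hαβ : α * β = β ^ 2 * α)
    (r : Multiplicative (ZMod (2 * n))) (t : Multiplicative (ZMod 3)) :
    SemiconjBy (α ^ (toAdd r).val) (β ^ (toAdd t).val) (β ^ (toAdd (phi n r t)).val) := by
  have hα2 : Commute (α ^ 2) β := by
    have hβ2 : SemiconjBy α (β ^ 2) β := by
      simpa [← pow_mul, pow_eq_pow_mod 4 hβ] using SemiconjBy.pow_right hαβ 2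
    rw [sq]
    exact hβ2.mul_left hαβ
  rw [phi_apply]
  obtain ⟨m, hm | hm⟩ := Nat.even_or_odd' (toAdd r).val
  · rw [if_pos ⟨m, by omega⟩, hm, pow_mul]
    exact hα2.pow_pow m _
  · rw [if_neg (Nat.not_even_iff_odd.mpr ⟨m, hm⟩), hm, pow_succ, pow_mul, toAdd_inv]
    have hneg : β ^ (-toAdd t).val = (β ^ 2) ^ (toAdd t).val := by
      rw [← pow_mul, pow_eq_pow_mod _ hβ, pow_eq_pow_mod (2 * _) hβ]
      congr 1
      generalize toAdd t = x
      fin_cases x <;> rfl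
    rw [hneg]
    exact SemiconjBy.mul_left ((hα2.pow_right 2).pow_pow m _) (SemiconjBy.pow_right hαβ _)

/-- The homomorphism `a ↦ α`, `b ↦ β` given by the presentation of `U_{6n}`; an element
`⟨l, r⟩` of the semidirect product is `b^l a^r`. -/
def U6n.lift (β α : H) (hβ : β ^ 3 = 1) (hα : α ^ (2 * n) = 1) (hαβ : α * β = β ^ 2 * α) :
    U6n n →* H where
  toFun g := β ^ (toAdd g.left).val * α ^ (toAdd g.right).val
  map_one' := by simp
  map_mul' g h := by
    simp only [SemidirectProduct.mul_left, SemidirectProduct.mul_right, toAdd_mul,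
      pow_val_add hβ, pow_val_add hα, mul_assoc]
    rw [← mul_assoc (α ^ _), (semiconjBy_pow_val hβ hαβ g.right h.left).eq, mul_assoc]

end Presentation

section Representations

open Multiplicative Matrix

noncomputable def zeta3 : ℂ := Complex.exp (2 * Real.pi * Complex.I / 3)

lemma isPrimitiveRoot_zeta3 : IsPrimitiveRoot zeta3 3 := by
  simpa [zeta3] using Complex.isPrimitiveRoot_exp 3 (by norm_num)

lemma zeta3_add_sq : zeta3 + zeta3 ^ 2 = -1 := by
  have h := isPrimitiveRoot_zeta3.geom_sum_eq_zero (by norm_num)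
  simp only [Finset.sum_range_succ, Finset.sum_range_zero] at h
  linear_combination h

noncomputable def zetaDiag : Matrix (Fin 2) (Fin 2) ℂ := diagonal ![zeta3, zeta3 ^ 2]

def swapMat : Matrix (Fin 2) (Fin 2) ℂ := !![0, 1; 1, 0]

lemma zetaDiag_pow_three : zetaDiag ^ 3 = 1 := by
  have h3 := isPrimitiveRoot_zeta3.pow_eq_one
  rw [zetaDiag, diagonal_pow]
  ext i j
  fin_cases i <;> fin_cases j <;> simp [← pow_mul, pow_mul' _ 2 3, h3]

lemma swapMat_sq : swapMat ^ 2 = 1 := by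
  rw [swapMat, sq, mul_fin_two, one_fin_two]
  norm_num

lemma swapMat_mul_zetaDiag : swapMat * zetaDiag = zetaDiag ^ 2 * swapMat := by
  have h3 := isPrimitiveRoot_zeta3.pow_eq_one
  rw [zetaDiag, swapMat, diagonal_pow]
  ext i j
  fin_cases i <;> fin_cases j <;> simp [← pow_mul, pow_succ _ 3, h3]

variable {n : ℕ} [NeZero n]

lemma isPrimitiveRoot_om : IsPrimitiveRoot (om n) (2 * n) := by
  convert Complex.isPrimitiveRoot_exp (2 * n) (NeZero.ne _) using 2
  have : (n : ℂ) ≠ 0 := Nat.cast_ne_zero.mpr (NeZero.ne n)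
  rw [om]
  push_cast
  field_simp

variable (n) in
noncomputable def chiHom (j : ℕ) : U6n n →* ℂ :=
  U6n.lift 1 (om n ^ j) (one_pow 3)
    (by rw [← pow_mul, mul_comm, pow_mul, isPrimitiveRoot_om.pow_eq_one, one_pow]) (by simp)

lemma coe_chiHom (j : ℕ) : ⇑(chiHom n j) = chi n j := by
  ext g
  simp [chiHom, U6n.lift, chi, pow_mul]

variable (n) in
noncomputable def rho (k : ℕ) : U6n n →* Matrix (Fin 2) (Fin 2) ℂ :=
  U6n.lift zetaDiag (om n ^ k • swapMat) zetaDiag_pow_three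
    (by rw [_root_.smul_pow, ← pow_mul, mul_comm k, pow_mul, isPrimitiveRoot_om.pow_eq_one,
      pow_mul, swapMat_sq, one_pow, one_pow, one_smul])
    (by rw [mul_smul_comm, smul_mul_assoc, swapMat_mul_zetaDiag])

lemma trace_rho (k : ℕ) (g : U6n n) : trace (rho n k g) = psi n k g := by
  obtain ⟨t, r⟩ := g
  simp only [rho, U6n.lift, MonoidHom.coe_mk, OneHom.coe_mk, psi, _root_.smul_pow,
    mul_smul_comm, trace_smul, ← pow_mul, zetaDiag, diagonal_pow, smul_eq_mul,
    ← toAdd_eq_zero (x := t)]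
  generalize toAdd t = x
  obtain ⟨m, hm | hm⟩ := Nat.even_or_odd' (toAdd r).val
  · rw [if_pos ⟨m, by omega⟩, hm, pow_mul _ 2 m, swapMat_sq, one_pow, mul_one, mul_comm]
    congr 1
    rw [trace_fin_two, diagonal_apply_eq, diagonal_apply_eq]
    simp only [← ZMod.val_eq_zero]
    have hx := ZMod.val_lt x
    generalize x.val = v at hx ⊢
    interval_cases v
    · norm_num
    · simp [zeta3_add_sq]
    · simp only [Pi.pow_apply, cons_val_zero, cons_val_one, cons_val_fin_one,
        OfNat.ofNat_ne_zero, ↓reduceIte]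
      linear_combination zeta3 * isPrimitiveRoot_zeta3.pow_eq_one + zeta3_add_sq
  · rw [if_neg (Nat.not_even_iff_odd.mpr ⟨m, hm⟩), hm, pow_succ _ (2 * m), pow_mul _ 2 m,
      swapMat_sq, one_pow, one_mul, trace_fin_two, diagonal_mul, diagonal_mul]
    simp [swapMat]

end Representations

section Inversion

open Multiplicative Matrix Finset

lemma geom_sum_eq_zero_of_pow_eq_one {K : Type*} [DivisionRing K] {x : K} {N : ℕ} (hx : x ≠ 1)
    (hN : x ^ N = 1) : ∑ i ∈ range N, x ^ i = 0 := by
  rw [geom_sum_eq hx, hN, sub_self, zero_div]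

variable {n : ℕ} [NeZero n]

lemma sum_chi_add_two_mul_sum_psi (g : U6n n) :
    ∑ j ∈ range (2 * n), chi n j g + 2 * ∑ k ∈ range n, psi n k g =
      if g = 1 then (6 * n : ℂ) else 0 := by
  have hω := isPrimitiveRoot_om (n := n)
  simp only [chi, psi, mul_comm _ (toAdd g.right).val, pow_mul]
  generalize hr : (toAdd g.right).val = r
  by_cases hr0 : r = 0
  · have hg : g = 1 ↔ g.left = 1 := by
      rw [SemidirectProduct.ext_iff, one_left, one_right, and_iff_left]
      rwa [← toAdd_eq_zero, ← ZMod.val_eq_zero, hr]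
    simp only [hr0, pow_zero, one_pow, Even.zero, if_true, mul_one, sum_const, card_range, hg]
    split_ifs <;> ring
  · have hωr : om n ^ r ≠ 1 := hω.pow_ne_one_of_pos_of_lt hr0 (hr ▸ ZMod.val_lt _)
    have hg : g ≠ 1 := fun h => hr0 (by simp [← hr, h])
    rw [if_neg hg, geom_sum_eq_zero_of_pow_eq_one hωr
      (by rw [← pow_mul, mul_comm, pow_mul, hω.pow_eq_one, one_pow]), zero_add]
    by_cases heven : Even r
    · obtain ⟨m, rfl⟩ := heven
      simp only [Even.add_self, if_true, ← mul_sum]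
      rw [geom_sum_eq_zero_of_pow_eq_one hωr (by
        rw [← pow_mul, show (m + m) * n = 2 * n * m by ring, pow_mul, hω.pow_eq_one, one_pow])]
      simp
    · simp [heven]

lemma eq_zero_of_fourierHat_eq_zero {v : U6n n → ℂ}
    (hχ : ∀ j < 2 * n, fourierHat (chiHom n j) v = 0)
    (hρ : ∀ k < n, fourierHat (rho n k) v = 0) : v = 0 := by
  ext g₀
  have h6n : (6 * n : ℂ) ≠ 0 := mul_ne_zero (by norm_num) (Nat.cast_ne_zero.mpr (NeZero.ne n))
  refine (mul_eq_zero.mp ?_).resolve_left h6n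
  calc (6 * n : ℂ) * v g₀
      = ∑ g, v g * (∑ j ∈ range (2 * n), chi n j (g * g₀⁻¹)
          + 2 * ∑ k ∈ range n, psi n k (g * g₀⁻¹)) := by
        simp_rw [sum_chi_add_two_mul_sum_psi, mul_inv_eq_one, mul_ite, mul_zero, sum_ite_eq',
          mem_univ, if_true, mul_comm]
    _ = ∑ j ∈ range (2 * n), fourierHat (chiHom n j) v * chi n j g₀⁻¹
          + 2 * ∑ k ∈ range n, trace (fourierHat (rho n k) v * rho n k g₀⁻¹) := by
        simp only [fourierHat, ← coe_chiHom, ← trace_rho, map_mul, mul_add, sum_add_distrib,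
          Finset.mul_sum, Finset.sum_mul, smul_mul_assoc, trace_sum, trace_smul, smul_eq_mul]
        congr 1 <;> rw [sum_comm] <;>
          exact sum_congr rfl fun _ _ => sum_congr rfl fun _ _ => by ring
    _ = 0 := by
        rw [sum_eq_zero fun j hj => by rw [hχ j (mem_range.mp hj), zero_mul],
          sum_eq_zero fun k hk => by rw [hρ k (mem_range.mp hk), zero_mul, trace_zero]]
        simp

end Inversion

section SpectrumU6n

open Matrix

variable {n : ℕ} [NeZero n] {S : Finset (U6n n)}

theorem spectrum_adjMat_cayleyGraph (h1 : (1 : U6n n) ∉ S) (hinv : S⁻¹ = S) :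
    spectrum ℂ (adjMat (cayleyGraph (S : Set (U6n n)))) =
      {z | (∃ j < 2 * n, z = fsum (chi n j) S) ∨
        ∃ k < n, z ∈ spectrum ℂ (∑ s ∈ S, rho n k s)} := by
  ext z
  refine ⟨fun hz => ?_, ?_⟩
  · obtain ⟨v, hv0, hv⟩ := mem_spectrum_iff_exists_mulVec_eq_smul.mp hz
    by_contra hzS
    simp only [Set.mem_ofPred_eq, not_or, not_exists, not_and] at hzS
    refine hv0 (eq_zero_of_fourierHat_eq_zero (fun j hj => ?_) (fun k hk => ?_))
    · by_contra h
      refine hzS.1 j hj (mul_right_cancel₀ h ?_).symm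
      rw [← smul_eq_mul z, ← sum_mul_fourierHat h1 hinv _ hv, fsum, coe_chiHom]
    · by_contra h
      exact hzS.2 k hk (mem_spectrum_of_mul_eq_smul h (sum_mul_fourierHat h1 hinv _ hv))
  · rintro (⟨j, -, rfl⟩ | ⟨k, -, hz⟩)
    · simpa [fsum, coe_chiHom] using mem_spectrum_adjMat_of_monoidHom h1 hinv (chiHom n j)
    · exact spectrum_subset_spectrum_adjMat h1 hinv (rho n k) hz

theorem isIntegral_cayleyGraph_iff (h1 : (1 : U6n n) ∉ S) (hinv : S⁻¹ = S) :
    IsIntegral (cayleyGraph (S : Set (U6n n))) ↔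
      (∀ j < 2 * n, ∃ m : ℤ, fsum (chi n j) S = m) ∧
        ∀ k < n, ∀ z ∈ spectrum ℂ (∑ s ∈ S, rho n k s), ∃ m : ℤ, z = m := by
  simp only [IsIntegral, spectrum_adjMat_cayleyGraph h1 hinv, Set.mem_ofPred_eq, or_imp,
    forall_and, forall_exists_index, and_imp]
  exact and_congr ⟨fun h j hj => h _ j hj rfl, fun h z j hj hz => hz ▸ h j hj⟩
    ⟨fun h k hk z hz => h z k hk hz, fun h z k hk hz => h k hk z hz⟩

end SpectrumU6n

section Traces

open Multiplicative Matrix Finset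

variable {n : ℕ}

lemma psi_eq_zero_of_not_isEvenElt (k : ℕ) {g : U6n n} (hg : ¬IsEvenElt g) : psi n k g = 0 :=
  if_neg hg

variable [NeZero n] {S₁ S₂ : Finset (U6n n)}

lemma isEvenElt_mul (g h : U6n n) : IsEvenElt (g * h) ↔ (IsEvenElt g ↔ IsEvenElt h) := by
  simp only [IsEvenElt, SemidirectProduct.mul_right, toAdd_mul, ZMod.val_add]
  rw [Nat.even_iff, Nat.mod_mod_of_dvd _ (dvd_mul_right 2 n), ← Nat.even_iff, Nat.even_add]

lemma trace_sum_rho (hS₁ : ∀ g ∈ S₁, IsEvenElt g) (hS₂ : ∀ g ∈ S₂, ¬IsEvenElt g) (k : ℕ) :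
    trace (∑ s ∈ S₁ ∪ S₂, rho n k s) = fsum (psi n k) S₁ := by
  have hdisj : Disjoint S₁ S₂ := disjoint_left.mpr fun g h₁ h₂ => hS₂ g h₂ (hS₁ g h₁)
  rw [trace_sum, sum_union hdisj, sum_eq_zero (s := S₂) fun s hs => by
    rw [trace_rho, psi_eq_zero_of_not_isEvenElt k (hS₂ s hs)], add_zero]
  simp only [trace_rho, fsum]

lemma trace_sum_rho_mul_self (hS₁ : ∀ g ∈ S₁, IsEvenElt g) (hS₂ : ∀ g ∈ S₂, ¬IsEvenElt g)
    (k : ℕ) :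
    trace ((∑ s ∈ S₁ ∪ S₂, rho n k s) * ∑ s ∈ S₁ ∪ S₂, rho n k s) =
      fsum2 (psi n k) S₁ + fsum2 (psi n k) S₂ := by
  have hdisj : Disjoint S₁ S₂ := disjoint_left.mpr fun g h₁ h₂ => hS₂ g h₂ (hS₁ g h₁)
  have hcross {s t : U6n n} (hst : IsEvenElt s ↔ ¬IsEvenElt t) : psi n k (s * t) = 0 :=
    psi_eq_zero_of_not_isEvenElt k (by rw [isEvenElt_mul]; tauto)
  rw [sum_mul_sum]
  simp only [trace_sum, ← map_mul, trace_rho]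
  simp only [sum_union hdisj, fsum2]
  congr 1 <;> refine sum_congr rfl fun s hs => ?_
  · rw [sum_eq_zero (s := S₂) fun t ht => hcross (by simp [hS₁ s hs, hS₂ t ht]), add_zero]
  · rw [sum_eq_zero (s := S₁) fun t ht => hcross (by simp [hS₁ t ht, hS₂ s hs]), zero_add]

end Traces

/-- Theorem 3.1: integrality criterion for `Cay(U_{6n}, S₁ ∪ S₂)` where `S₁` consists of
even elements and `S₂` of odd elements. -/
theorem integrality_criterion (n : ℕ) [NeZero n] (S₁ S₂ : Finset (U6n n))
    (hS₁ : ∀ g ∈ S₁, IsEvenElt g) (hS₂ : ∀ g ∈ S₂, ¬ IsEvenElt g)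
    (h1 : (1 : U6n n) ∉ S₁ ∪ S₂) (hinv : (S₁ ∪ S₂)⁻¹ = S₁ ∪ S₂) :
    IsIntegral (cayleyGraph ((S₁ ∪ S₂ : Finset (U6n n)) : Set (U6n n))) ↔
      ((∀ j : ℕ, j ≤ 2 * n - 1 → ∃ m : ℤ, fsum (chi n j) (S₁ ∪ S₂) = (m : ℂ)) ∧
       (∀ k : ℕ, k ≤ n - 1 →
         (∃ m : ℤ, fsum (psi n k) S₁ = (m : ℂ)) ∧
         (∃ m : ℤ, fsum2 (psi n k) S₁ + fsum2 (psi n k) S₂ = (m : ℂ)) ∧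
         (∃ m : ℤ, 2 * (fsum2 (psi n k) S₁ + fsum2 (psi n k) S₂)
            - (fsum (psi n k) S₁) ^ 2 = (m : ℂ) ^ 2))) := by
  have h2n (j : ℕ) : j ≤ 2 * n - 1 ↔ j < 2 * n := by have := NeZero.pos n; omega
  have hn1 (k : ℕ) : k ≤ n - 1 ↔ k < n := by have := NeZero.pos n; omega
  simp only [isIntegral_cayleyGraph_iff h1 hinv, forall_mem_spectrum_int_iff_fin_two, h2n, hn1,
    trace_sum_rho hS₁ hS₂, trace_sum_rho_mul_self hS₁ hS₂]

end U6nPaper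
end

section
/- Let n > 1 be an integer and S = S₁ ∪ S₂ ⊆ U_{6n}, where S₁ = ⟨a²⟩ ∖ {1} and S₂ = {a^{2r+1}, a^{2r+1}b : 0 ≤ r ≤ n−1}. Then Cay(U_{6n}, S) is a connected integral graph, and the characteristic polynomial of its adjacency matrix equals (X+n+1) · (X+1)^{6n−4} · (X−(2n−1))² · (X−(3n−1)). -/
open Complex SemidirectProduct Polynomial
open scoped Pointwise

/-!
The subgroup `⟨a²⟩` is central of order `n`, and `S ∪ {1}` is the union of its cosets `⟨a²⟩`,
`a⟨a²⟩` and `ab⟨a²⟩`. Hence adjacency in `Cay(U_{6n}, S)` depends only on the images in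
`U_{6n}/⟨a²⟩ ≅ U₆ ≅ S₃`, where `{1, a, ab}` spans a hexagon with a loop at each vertex:
the graph is the hexagon with every vertex blown up to a clique `Kₙ`. Factoring `A + 1` through
the `6`-element quotient shows that its spectrum is `n` times that of `1 + A(C₆)`, namely
`n · {3, 2, 2, 0, 0, -1}`, together with `0` of multiplicity `6n - 6`; connectivity lifts from
the hexagon because the fibres are cliques.
-/

open Finset

namespace MonoidHom

variable {G Q : Type*} [Group G] [Fintype G] [Group Q] [Fintype Q] [DecidableEq Q]

theorem card_fiber_mul_card_eq (f : G →* Q) (hf : Function.Surjective f) (q : Q) :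
    #{g | f g = q} * Fintype.card Q = Fintype.card G := by
  calc #{g | f g = q} * Fintype.card Q = ∑ _r : Q, #{g | f g = q} := by
        rw [sum_const, card_univ, smul_eq_mul, mul_comm]
    _ = ∑ r : Q, #{g | f g = r} :=
        sum_congr rfl fun r _ => card_fiber_eq_of_mem_range f (hf q) (hf r)
    _ = Fintype.card G :=
        (card_univ.symm.trans (card_eq_sum_card_fiberwise fun _ _ => mem_univ (f _))).symm

end MonoidHom

namespace Matrix

variable {ι R : Type*} [Fintype ι] [DecidableEq ι] [CommRing R]

/-- `M.submatrix f f = P * Q` with `P = M.submatrix f id` and `Q` the fibre indicator of `f`,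
while `Q * P = k • M`. -/
theorem X_pow_card_mul_charpoly_submatrix {V : Type*} [Fintype V] [DecidableEq V] (f : V → ι)
    {k : ℕ} (hf : ∀ c, #{v | f v = c} = k) (M : Matrix ι ι R) :
    X ^ Fintype.card ι * (M.submatrix f f).charpoly =
      X ^ Fintype.card V * ((k : R) • M).charpoly := by
  let P : Matrix V ι R := M.submatrix f id
  let Q : Matrix ι V R := of fun c v => if f v = c then 1 else 0
  have hPQ : P * Q = M.submatrix f f := by
    ext v w
    simp [P, Q, mul_apply]
  have hQP : Q * P = (k : R) • M := by
    ext c d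
    simp only [P, Q, mul_apply, of_apply, submatrix_apply, id, ite_mul, one_mul, zero_mul,
      ← sum_filter]
    rw [sum_congr rfl fun v hv => by rw [(mem_filter.mp hv).2], sum_const, hf, smul_apply,
      smul_eq_mul, nsmul_eq_mul]
  rw [← hPQ, ← hQP, charpoly_mul_comm']

theorem charpoly_eq_prod_of_mul_eq_mul_diagonal {M W : Matrix ι ι R} {d : ι → R}
    (hW : IsUnit W.det) (h : M * W = W * diagonal d) :
    M.charpoly = ∏ i, (X - C (d i)) := by
  have hu : IsUnit W := (isUnit_iff_isUnit_det W).mpr hW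
  have hM : M = hu.unit.val * diagonal d * hu.unit.val⁻¹ := by
    rw [IsUnit.unit_spec, ← h, mul_assoc, mul_nonsing_inv _ hW, mul_one]
  rw [hM, charpoly_units_conj, charpoly_diagonal]

end Matrix

namespace U6nPaper

open Matrix

section CayleyPreimage

variable {G Q : Type*} [Group G] [Group Q]

theorem cayleyGraph_adj_iff {S : Set G} (hS : ∀ s ∈ S, s⁻¹ ∈ S) {g h : G} :
    (cayleyGraph S).Adj g h ↔ g ≠ h ∧ h * g⁻¹ ∈ S := by
  rw [cayleyGraph, SimpleGraph.fromRel_adj]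
  refine and_congr_right fun _ => ⟨?_, Or.inl⟩
  rintro (hs | hs)
  · exact hs
  · simpa using hS _ hs

variable (π : G →* Q) {T : Set Q}

theorem cayleyGraph_preimage_adj_iff (hT : ∀ t ∈ T, t⁻¹ ∈ T) {g h : G} :
    (cayleyGraph (π ⁻¹' T \ {1})).Adj g h ↔ g ≠ h ∧ π h * (π g)⁻¹ ∈ T := by
  have hS : ∀ s ∈ π ⁻¹' T \ {1}, s⁻¹ ∈ π ⁻¹' T \ {1} := fun s ⟨hs, hs1⟩ =>
    ⟨by simpa using hT _ hs, by simpa using hs1⟩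
  rw [cayleyGraph_adj_iff hS]
  simp only [Set.mem_sdiff, Set.mem_preimage, map_mul, map_inv, Set.mem_singleton_iff,
    mul_inv_eq_one]
  exact and_congr_right fun hgh => ⟨And.left, fun ht => ⟨ht, Ne.symm hgh⟩⟩

/-- Vertices in one fibre of `π` are adjacent because `1 ∈ T`, so walks in `Cay(Q, T)` lift. -/
theorem cayleyGraph_preimage_connected (hπ : Function.Surjective π) (hT : ∀ t ∈ T, t⁻¹ ∈ T)
    (h1 : 1 ∈ T) (hQ : (cayleyGraph T).Connected) :
    (cayleyGraph (π ⁻¹' T \ {1})).Connected := by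
  have reachable_of_mem {g h : G} (hgh : π h * (π g)⁻¹ ∈ T) :
      (cayleyGraph (π ⁻¹' T \ {1})).Reachable g h := by
    by_cases heq : g = h
    · exact heq ▸ SimpleGraph.Reachable.refl g
    · exact ((cayleyGraph_preimage_adj_iff π hT).mpr ⟨heq, hgh⟩).reachable
  have lift {q r : Q} (w : (cayleyGraph T).Walk q r) :
      ∀ g h, π g = q → π h = r → (cayleyGraph (π ⁻¹' T \ {1})).Reachable g h := by
    induction w with
    | nil =>
      rintro g h rfl hh
      exact reachable_of_mem (by rwa [hh, mul_inv_cancel])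
    | @cons _ q' _ hadj _ ih =>
      rintro g h rfl hh
      obtain ⟨g', rfl⟩ := hπ q'
      exact (reachable_of_mem ((cayleyGraph_adj_iff hT).mp hadj).2).trans (ih g' h rfl hh)
  have : Nonempty G := ⟨1⟩
  exact ⟨fun g h => lift (hQ.preconnected (π g) (π h)).some g h rfl rfl⟩

def connectionMatrix (R : Type*) [Zero R] [One R] [DecidableEq Q] (T : Finset Q) :
    Matrix Q Q R :=
  of fun q r => if r * q⁻¹ ∈ T then 1 else 0

theorem connectionMatrix_map {R S : Type*} [Ring R] [Ring S] [DecidableEq Q] (f : R →+* S)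
    (T : Finset Q) : (connectionMatrix R T).map f = connectionMatrix S T := by
  ext q r
  simp [connectionMatrix, apply_ite f]

theorem adjMat_cayleyGraph_preimage [DecidableEq G] [DecidableEq Q] {T : Finset Q}
    (hT : ∀ t ∈ T, t⁻¹ ∈ T) (h1 : 1 ∈ T) :
    adjMat (cayleyGraph (π ⁻¹' T \ {1})) = (connectionMatrix ℂ T).submatrix π π - 1 := by
  ext g h
  rw [adjMat, Matrix.sub_apply, submatrix_apply, connectionMatrix, of_apply,
    cayleyGraph_preimage_adj_iff π (T := T) (by simpa using hT)]
  by_cases heq : g = h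
  · subst heq
    rw [Matrix.one_apply_eq]
    simp [h1]
  · simp [heq, one_apply_ne heq]

end CayleyPreimage

section U6

variable (n : ℕ)

def expMod2 : Multiplicative (ZMod (2 * n)) →* Multiplicative (ZMod (2 * 1)) :=
  AddMonoidHom.toMultiplicative
    (ZMod.castHom (mul_dvd_mul_left 2 (one_dvd n)) (ZMod (2 * 1))).toAddMonoidHom

theorem phi_one_expMod2 (r : Multiplicative (ZMod (2 * n))) : phi 1 (expMod2 n r) = phi n r := by
  have hcast : (ZMod.castHom (⟨1, rfl⟩ : 2 ∣ 2 * 1) (ZMod 2)).comp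
      (ZMod.castHom (mul_dvd_mul_left 2 (one_dvd n)) (ZMod (2 * 1))) =
      ZMod.castHom ⟨n, rfl⟩ (ZMod 2) := Subsingleton.elim _ _
  simp only [phi, expMod2, MonoidHom.comp_apply]
  exact congrArg (fun f : ZMod (2 * n) →+* ZMod 2 => sgn2 (Multiplicative.ofAdd (f r.toAdd)))
    hcast

/-- Reduction modulo the central subgroup `⟨a²⟩`, whose quotient is `U_6 ≅ S₃`. -/
def toU6 : U6n n →* U6n 1 :=
  SemidirectProduct.map (MonoidHom.id _) (expMod2 n) fun r => by
    rw [phi_one_expMod2]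
    rfl

theorem toU6_aU : toU6 n (aU n) = aU 1 := by
  simp [toU6, aU, expMod2]

theorem toU6_bU : toU6 n (bU n) = bU 1 := by
  simp [toU6, bU]

theorem toU6_surjective : Function.Surjective (toU6 n) := by
  intro q
  obtain ⟨r, hr⟩ := ZMod.ringHom_surjective
    (ZMod.castHom (mul_dvd_mul_left 2 (one_dvd n)) (ZMod (2 * 1))) q.right.toAdd
  exact ⟨⟨q.left, Multiplicative.ofAdd r⟩, SemidirectProduct.ext rfl hr⟩

theorem card_U6n [NeZero n] : Fintype.card (U6n n) = 6 * n := by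
  rw [Fintype.card_congr (u6nEquiv n), Fintype.card_prod, ZMod.card, ZMod.card]
  ring

theorem card_fiber_toU6 [NeZero n] (q : U6n 1) : #{g | toU6 n g = q} = n := by
  have h := (toU6 n).card_fiber_mul_card_eq (toU6_surjective n) q
  rw [card_U6n, card_U6n] at h
  omega

theorem aU_pow (k : ℕ) : aU n ^ k = inr (Multiplicative.ofAdd (k : ZMod (2 * n))) := by
  rw [aU, ← map_pow, ← ofAdd_nsmul, nsmul_one]

theorem aU_one_sq : aU 1 ^ 2 = 1 := by decide

theorem exists_eq_aU_pow_of_toU6_eq [NeZero n] {x : U6n n} {e : ℕ} (he : e < 2)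
    (hx : toU6 n x = aU 1 ^ e) : ∃ r < n, x = aU n ^ (2 * r + e) := by
  rw [aU_pow, SemidirectProduct.ext_iff] at hx
  obtain ⟨hleft, hright⟩ := hx
  set v := x.right.toAdd.val with hv
  have hv_lt : v < 2 * n := ZMod.val_lt _
  have hv_mod : v % 2 = e := by
    have : (v : ZMod (2 * 1)) = e := by
      rw [hv, ← ZMod.cast_eq_val]
      exact congrArg Multiplicative.toAdd hright
    rw [ZMod.natCast_eq_natCast_iff'] at this
    omega
  refine ⟨v / 2, by omega, ?_⟩
  rw [aU_pow, show 2 * (v / 2) + e = v by omega, hv, ZMod.natCast_zmod_val]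
  exact SemidirectProduct.ext hleft rfl

def connectionSetU6 : Finset (U6n 1) := {1, aU 1, aU 1 * bU 1}

theorem inv_mem_connectionSetU6 : ∀ t ∈ connectionSetU6, t⁻¹ ∈ connectionSetU6 := by decide

theorem one_mem_connectionSetU6 : 1 ∈ connectionSetU6 := by decide

theorem toU6_aU_pow_odd (r : ℕ) : toU6 n (aU n ^ (2 * r + 1)) = aU 1 := by
  rw [map_pow, toU6_aU, pow_succ, pow_mul, aU_one_sq, one_pow, one_mul]

theorem mem_zpowers_aU_sq_iff [NeZero n] {x : U6n n} :
    x ∈ Subgroup.zpowers (aU n ^ 2) ↔ toU6 n x = 1 := by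
  constructor
  · rintro ⟨k, rfl⟩
    rw [map_zpow, map_pow, toU6_aU, aU_one_sq, _root_.one_zpow]
  · intro hx
    obtain ⟨r, -, rfl⟩ := exists_eq_aU_pow_of_toU6_eq n (e := 0) (by norm_num)
      (by rw [hx, pow_zero])
    exact ⟨r, by simp only [zpow_natCast, ← pow_mul, add_zero]⟩

theorem exists_eq_aU_pow_odd_iff [NeZero n] {x : U6n n} :
    (∃ r : ℕ, r ≤ n - 1 ∧ (x = aU n ^ (2 * r + 1) ∨ x = aU n ^ (2 * r + 1) * bU n)) ↔
      toU6 n x = aU 1 ∨ toU6 n x = aU 1 * bU 1 := by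
  have odd_of {y : U6n n} (hy : toU6 n y = aU 1) : ∃ r, r ≤ n - 1 ∧ y = aU n ^ (2 * r + 1) := by
    obtain ⟨r, hr, rfl⟩ := exists_eq_aU_pow_of_toU6_eq n (e := 1) (by norm_num)
      (by rw [hy, pow_one])
    exact ⟨r, by omega, rfl⟩
  constructor
  · rintro ⟨r, -, rfl | rfl⟩
    · exact Or.inl (toU6_aU_pow_odd n r)
    · exact Or.inr (by rw [map_mul, toU6_aU_pow_odd, toU6_bU])
  · rintro (hx | hx)
    · obtain ⟨r, hr, hxr⟩ := odd_of hx
      exact ⟨r, hr, Or.inl hxr⟩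
    · obtain ⟨r, hr, hxr⟩ := odd_of (y := x * (bU n)⁻¹)
        (by rw [map_mul, map_inv, hx, toU6_bU, mul_inv_cancel_right])
      exact ⟨r, hr, Or.inr (by rw [← hxr, inv_mul_cancel_right])⟩

theorem connectionSet_eq_preimage [NeZero n] :
    ((Subgroup.zpowers (aU n ^ 2) : Set (U6n n)) \ {1}) ∪
      {x | ∃ r : ℕ, r ≤ n - 1 ∧ (x = aU n ^ (2 * r + 1) ∨ x = aU n ^ (2 * r + 1) * bU n)} =
    toU6 n ⁻¹' connectionSetU6 \ {1} := by
  ext x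
  simp only [Set.mem_union, Set.mem_sdiff, SetLike.mem_coe, Set.mem_singleton_iff,
    Set.mem_ofPred_eq, mem_zpowers_aU_sq_iff, exists_eq_aU_pow_odd_iff, Set.mem_preimage,
    connectionSetU6, Finset.coe_insert, Finset.coe_singleton, Set.mem_insert_iff]
  by_cases hx : x = 1
  · have : (1 : U6n 1) ≠ aU 1 ∧ (1 : U6n 1) ≠ aU 1 * bU 1 := by decide
    simp [hx, this]
  · tauto

end U6

instance : DecidableRel (cayleyGraph (connectionSetU6 : Set (U6n 1))).Adj := by
  unfold cayleyGraph
  infer_instance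

theorem cayleyGraph_connectionSetU6_connected :
    (cayleyGraph (connectionSetU6 : Set (U6n 1))).Connected := by
  decide

/-- `Cay(U₆, {a, ab})` is a hexagon: its vertices in cyclic order, alternately multiplied on the
left by `a` and `ab`. -/
noncomputable def cycleU6 : Fin 6 ≃ U6n 1 :=
  Equiv.ofBijective ![1, aU 1, aU 1 * bU 1 * aU 1, aU 1 * (aU 1 * bU 1) * aU 1,
    aU 1 * bU 1 * aU 1 * (aU 1 * bU 1) * aU 1,
    aU 1 * (aU 1 * bU 1) * aU 1 * (aU 1 * bU 1) * aU 1] (by decide)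

/-- Columns: integer eigenvectors of `1 +` the hexagon's adjacency matrix, for `eigvalU6`. -/
def eigvecU6 : Matrix (Fin 6) (Fin 6) ℤ :=
  !![1, 1, 1, 0, 1, 0;
     1, -1, 1, 1, -1, 1;
     1, 1, 0, 1, 0, -1;
     1, -1, -1, 0, 1, 0;
     1, 1, -1, -1, -1, 1;
     1, -1, 0, -1, 0, -1]

def eigvalU6 : Fin 6 → ℤ := ![3, -1, 2, 2, 0, 0]

theorem connectionMatrix_cycleU6_mul_eigvecU6 :
    (connectionMatrix ℤ connectionSetU6).submatrix cycleU6 cycleU6 * eigvecU6 =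
      eigvecU6 * diagonal eigvalU6 := by
  decide

set_option maxRecDepth 100000 in
theorem det_eigvecU6 : eigvecU6.det = -72 := by decide

theorem charpoly_smul_connectionMatrix (k : ℕ) :
    ((k : ℂ) • connectionMatrix ℂ connectionSetU6).charpoly =
      ∏ i, (X - C ((k : ℂ) * eigvalU6 i)) := by
  rw [← charpoly_reindex cycleU6.symm]
  apply charpoly_eq_prod_of_mul_eq_mul_diagonal (W := eigvecU6.map (Int.castRingHom ℂ))
  · rw [← RingHom.mapMatrix_apply, ← RingHom.map_det, det_eigvecU6]
    norm_num
  · rw [reindex_apply, Equiv.symm_symm, ← connectionMatrix_map (Int.castRingHom ℂ)]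
    change (k : ℂ) • ((connectionMatrix ℤ connectionSetU6).submatrix cycleU6 cycleU6).map
      (Int.castRingHom ℂ) * _ = _
    rw [Matrix.smul_mul, ← Matrix.map_mul, connectionMatrix_cycleU6_mul_eigvecU6,
      Matrix.map_mul, diagonal_map (map_zero _), ← Matrix.mul_smul, ← diagonal_smul]
    rfl

theorem charpoly_adjMat_cayleyGraph_toU6 (n : ℕ) [NeZero n] :
    (adjMat (cayleyGraph (toU6 n ⁻¹' connectionSetU6 \ {1}))).charpoly =
      (X + C ((n : ℂ) + 1)) * (X + 1) ^ (6 * n - 4) *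
      (X - C (2 * (n : ℂ) - 1)) ^ 2 * (X - C (3 * (n : ℂ) - 1)) := by
  have hsub : ((connectionMatrix ℂ connectionSetU6).submatrix (toU6 n) (toU6 n)).charpoly =
      X ^ (6 * n - 6) * ∏ i, (X - C ((n : ℂ) * eigvalU6 i)) := by
    have hblowup := X_pow_card_mul_charpoly_submatrix (toU6 n) (card_fiber_toU6 n)
      (connectionMatrix ℂ connectionSetU6)
    simp only [charpoly_smul_connectionMatrix] at hblowup
    rw [card_U6n n, card_U6n 1,
      show 6 * n = 6 * 1 + (6 * n - 6) by have := NeZero.one_le (n := n); omega, pow_add,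
      mul_assoc] at hblowup
    exact mul_left_cancel₀ (pow_ne_zero _ X_ne_zero) hblowup
  rw [adjMat_cayleyGraph_preimage _ inv_mem_connectionSetU6 one_mem_connectionSetU6,
    ← (scalar (U6n n)).map_one, charpoly_sub_scalar, hsub,
    show 6 * n - 4 = (6 * n - 6) + 2 by have := NeZero.one_le (n := n); omega]
  simp only [Fin.prod_univ_six, mul_comp, pow_comp, sub_comp, X_comp, C_comp]
  simp only [eigvalU6, cons_val_zero, cons_val_one, Matrix.cons_val, Int.cast_ofNat,
    Int.cast_neg, Int.cast_one, Int.cast_zero, map_one, map_mul, map_natCast, map_ofNat, map_neg,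
    map_zero, map_add, map_sub, mul_neg, mul_one, mul_zero, sub_neg_eq_add, sub_zero]
  ring

theorem isIntegral_of_charpoly_eq {V : Type*} [Fintype V] [DecidableEq V] {Γ : SimpleGraph V}
    {n : ℕ} (h : (adjMat Γ).charpoly = (X + C ((n : ℂ) + 1)) * (X + 1) ^ (6 * n - 4) *
      (X - C (2 * (n : ℂ) - 1)) ^ 2 * (X - C (3 * (n : ℂ) - 1))) :
    IsIntegral Γ := by
  intro z hz
  rw [mem_spectrum_iff_isRoot_charpoly, h] at hz
  simp only [IsRoot, eval_mul, eval_pow, eval_add, eval_sub, eval_X, eval_C, eval_one,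
    mul_eq_zero, pow_eq_zero_iff'] at hz
  rcases hz with (((hz | ⟨hz, -⟩) | ⟨hz, -⟩) | hz)
  · exact ⟨-(n + 1), by push_cast; linear_combination hz⟩
  · exact ⟨-1, by push_cast; linear_combination hz⟩
  · exact ⟨2 * n - 1, by push_cast; linear_combination hz⟩
  · exact ⟨3 * n - 1, by push_cast; linear_combination hz⟩

/-- Corollary 4.2: for `n > 1`, `S₁ = ⟨a²⟩ ∖ {1}` and `S₂ = {a^{2r+1}, a^{2r+1}b : 0 ≤ r ≤ n-1}`,
the graph `Cay(U_{6n}, S₁ ∪ S₂)` is connected and integral with spectrum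
`{-n-1, [-1]^{6n-4}, [2n-1]^2, 3n-1}`. -/
theorem corollary_4_2 (n : ℕ) (hn : 1 < n) (S₁ S₂ : Set (U6n n))
    (hS₁ : S₁ = (Subgroup.zpowers (aU n ^ 2) : Set (U6n n)) \ {1})
    (hS₂ : S₂ = {x | ∃ r : ℕ, r ≤ n - 1 ∧
      (x = aU n ^ (2 * r + 1) ∨ x = aU n ^ (2 * r + 1) * bU n)}) :
    haveI : NeZero n := ⟨by omega⟩
    (cayleyGraph (S₁ ∪ S₂)).Connected ∧
    IsIntegral (cayleyGraph (S₁ ∪ S₂)) ∧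
    (adjMat (cayleyGraph (S₁ ∪ S₂))).charpoly =
      (X + C ((n : ℂ) + 1)) * (X + 1) ^ (6 * n - 4) *
      (X - C (2 * (n : ℂ) - 1)) ^ 2 * (X - C (3 * (n : ℂ) - 1)) := by
  have : NeZero n := ⟨by omega⟩
  subst hS₁ hS₂
  rw [connectionSet_eq_preimage]
  have hcharpoly := charpoly_adjMat_cayleyGraph_toU6 n
  exact ⟨cayleyGraph_preimage_connected _ (toU6_surjective n) inv_mem_connectionSetU6
      one_mem_connectionSetU6 cayleyGraph_connectionSetU6_connected,
    isIntegral_of_charpoly_eq hcharpoly, hcharpoly⟩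

end U6nPaper
end

section
/- Let R, L ⊆ {0, 1, …, n−1} and S₁ = {a^{2r} : r ∈ R} ∪ {a^{2l}b, a^{−2l}b² : l ∈ L} ⊆ U_{6n}. Set S_L = {a^{2l} : l ∈ L} and suppose S_L = S_L^{−1}. Then for every 0 ≤ k ≤ n−1: (1) ψ_k(S₁) = 2(∑_{r∈R} ω^{2kr} − ∑_{l∈L} ω^{2kl}); and (2) ψ_k(S₁²) = 2(∑_{r∈R} ω^{2kr} − ∑_{l∈L} ω^{2kl})². -/
open Complex SemidirectProduct Polynomial
open scoped Pointwise

namespace U6nPaper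

/-!
Every element of `S₁` lies in the subgroup `⟨a², b⟩`, where `a²` is central. There
`ψ_k(b^β a^{2m}) = c(β) χ(m)` with `c(0) = 2`, `c(1) = c(2) = -1` and `χ(m) = ω^{2km}` a character.
Writing `X = ∑_R χ(r)`, `Y = ∑_L χ(l)` and `Z = ∑_L χ(-l)`, this gives `ψ_k(S₁) = 2X - Y - Z` and
`ψ_k(S₁²) = 2X² + 4YZ - 2XY - 2XZ - Y² - Z²`, while `S_L = S_L⁻¹` forces `Z = Y`.
-/

section EvenSubgroup

variable (n : ℕ)

lemma phi_eq_one_of_castHom_eq_zero {x : ZMod (2 * n)}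
    (hx : ZMod.castHom ⟨n, rfl⟩ (ZMod 2) x = 0) : phi n (Multiplicative.ofAdd x) = 1 := by
  simp [phi, sgn2, hx]

lemma castHom_two_mul (x : ZMod (2 * n)) : ZMod.castHom ⟨n, rfl⟩ (ZMod 2) (2 * x) = 0 := by
  rw [map_mul, map_ofNat]
  exact zero_mul _

-- `(β, m) ↦ b^β a^{2m}`: its image is the subgroup `⟨a², b⟩`, on which `a²` acts trivially.
def evenHom : Multiplicative (ZMod 3 × ℤ) →* U6n n where
  toFun x := ⟨.ofAdd x.toAdd.1, .ofAdd (2 * (x.toAdd.2 : ZMod (2 * n)))⟩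
  map_one' := by ext <;> simp
  map_mul' x y := by
    ext
    · simp [phi_eq_one_of_castHom_eq_zero n (castHom_two_mul n _)]
    · simp [mul_add]

lemma aU_sq : aU n ^ 2 = evenHom n (.ofAdd (0, 1)) := by
  ext <;> simp [aU, evenHom, sq, one_add_one_eq_two]

lemma bU_eq : bU n = evenHom n (.ofAdd (1, 0)) := by
  ext <;> simp [bU, evenHom]

lemma aU_pow_two_mul (m : ℕ) : aU n ^ (2 * m) = evenHom n (.ofAdd (0, m)) := by
  rw [pow_mul, aU_sq, ← map_pow, ← ofAdd_nsmul]
  simp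

lemma evenHom_eq_evenHom_iff {x y : ZMod 3 × ℤ} :
    evenHom n (.ofAdd x) = evenHom n (.ofAdd y) ↔ x.1 = y.1 ∧ x.2 ≡ y.2 [ZMOD n] := by
  have h2 : ∀ m : ℤ, 2 * (m : ZMod (2 * n)) = ((2 * m : ℤ) : ZMod (2 * n)) := by simp
  simp only [SemidirectProduct.ext_iff, evenHom, MonoidHom.coe_mk, OneHom.coe_mk, toAdd_ofAdd,
    EmbeddingLike.apply_eq_iff_eq, h2, ZMod.intCast_eq_intCast_iff, Nat.cast_mul, Nat.cast_ofNat,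
    Int.ModEq.mul_left_cancel_iff' two_ne_zero]

variable [NeZero n]

lemma even_val_two_mul (y : ZMod (2 * n)) : Even (2 * y).val := by
  rw [even_iff_two_dvd, ← ZMod.natCast_eq_zero_iff, ZMod.natCast_val, ← ZMod.castHom_apply]
  exact castHom_two_mul n y

lemma om_pow_two_mul : om n ^ (2 * n) = 1 := by
  have hn : (n : ℂ) ≠ 0 := Nat.cast_ne_zero.mpr (NeZero.ne n)
  rw [om, ← Complex.exp_nat_mul, ← Complex.exp_two_pi_mul_I]
  congr 1
  push_cast
  field_simp

noncomputable def omChar (k : ℕ) : AddChar (ZMod (2 * n)) ℂ :=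
  AddChar.zmodChar (2 * n) (ζ := om n ^ k) <| by
    rw [← pow_mul, mul_comm, pow_mul, om_pow_two_mul, one_pow]

lemma omChar_two_mul_natCast (k m : ℕ) : omChar n k (2 * m) = om n ^ (2 * k * m) := by
  have h : (2 * m : ZMod (2 * n)) = ((2 * m : ℕ) : ZMod (2 * n)) := by push_cast; rfl
  rw [omChar, h, AddChar.zmodChar_apply', ← pow_mul, mul_assoc, mul_left_comm]

lemma psi_evenHom (k : ℕ) (x : ZMod 3 × ℤ) :
    psi n k (evenHom n (.ofAdd x)) = (if x.1 = 0 then 2 else -1) * omChar n k (2 * x.2) := by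
  simp [psi, evenHom, even_val_two_mul, omChar, AddChar.zmodChar_apply, pow_mul]

lemma psi_evenHom_mul (k : ℕ) (x y : ZMod 3 × ℤ) :
    psi n k (evenHom n (.ofAdd x) * evenHom n (.ofAdd y)) =
      (if x.1 + y.1 = 0 then 2 else -1) * (omChar n k (2 * x.2) * omChar n k (2 * y.2)) := by
  rw [← map_mul, ← ofAdd_add, psi_evenHom, Prod.fst_add, Prod.snd_add, Int.cast_add, mul_add,
    AddChar.map_add_eq_mul]

end EvenSubgroup

section ConnectionSet

variable (n : ℕ)

lemma aU_pow_two_mul_mul_bU (m : ℕ) : aU n ^ (2 * m) * bU n = evenHom n (.ofAdd (1, m)) := by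
  rw [aU_pow_two_mul, bU_eq, ← map_mul, ← ofAdd_add, Prod.mk_add_mk, zero_add, add_zero]

lemma inv_aU_pow_two_mul_mul_bU_sq (m : ℕ) :
    (aU n ^ (2 * m))⁻¹ * bU n ^ 2 = evenHom n (.ofAdd (2, -m)) := by
  rw [aU_pow_two_mul, bU_eq, ← map_inv, ← map_pow, ← map_mul, ← ofAdd_neg, ← ofAdd_nsmul,
    ← ofAdd_add]
  congr
  ext <;> simp

lemma evenHom_natCast_injOn_range (β : ZMod 3) :
    Set.InjOn (fun m : ℕ => evenHom n (.ofAdd (β, (m : ℤ)))) (Finset.range n) := by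
  intro a ha b hb h
  rw [evenHom_eq_evenHom_iff, Int.natCast_modEq_iff] at h
  exact h.2.eq_of_lt_of_lt (Finset.mem_range.1 ha) (Finset.mem_range.1 hb)

lemma evenHom_neg_natCast_injOn_range (β : ZMod 3) :
    Set.InjOn (fun m : ℕ => evenHom n (.ofAdd (β, -(m : ℤ)))) (Finset.range n) := by
  intro a ha b hb h
  rw [evenHom_eq_evenHom_iff, Int.neg_modEq_neg, Int.natCast_modEq_iff] at h
  exact h.2.eq_of_lt_of_lt (Finset.mem_range.1 ha) (Finset.mem_range.1 hb)

lemma disjoint_image_evenHom {β β' : ZMod 3} (h : β ≠ β') (s t : Finset ℕ) (f g : ℕ → ℤ) :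
    Disjoint (s.image fun m => evenHom n (.ofAdd (β, f m)))
      (t.image fun m => evenHom n (.ofAdd (β', g m))) := by
  simp only [Finset.disjoint_left, Finset.mem_image]
  rintro _ ⟨a, -, rfl⟩ ⟨b, -, hb⟩
  exact h ((evenHom_eq_evenHom_iff n).1 hb).1.symm

def connectionSet (R L : Finset ℕ) : Finset (U6n n) :=
  R.image (fun r => aU n ^ (2 * r)) ∪
    (L.image (fun l => aU n ^ (2 * l) * bU n) ∪ L.image (fun l => (aU n ^ (2 * l))⁻¹ * bU n ^ 2))

lemma sum_connectionSet {M : Type*} [AddCommMonoid M] {R L : Finset ℕ}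
    (hR : R ⊆ Finset.range n) (hL : L ⊆ Finset.range n) (f : U6n n → M) :
    ∑ s ∈ connectionSet n R L, f s = ∑ r ∈ R, f (evenHom n (.ofAdd (0, r))) +
      (∑ l ∈ L, f (evenHom n (.ofAdd (1, l))) + ∑ l ∈ L, f (evenHom n (.ofAdd (2, -l)))) := by
  simp only [connectionSet, aU_pow_two_mul_mul_bU, inv_aU_pow_two_mul_mul_bU_sq]
  simp only [aU_pow_two_mul]
  rw [Finset.sum_union (Finset.disjoint_union_right.2
      ⟨disjoint_image_evenHom n (by decide) _ _ _ _, disjoint_image_evenHom n (by decide) _ _ _ _⟩),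
    Finset.sum_union (disjoint_image_evenHom n (by decide) _ _ _ _),
    Finset.sum_image ((evenHom_natCast_injOn_range n 0).mono (Finset.coe_subset.2 hR)),
    Finset.sum_image ((evenHom_natCast_injOn_range n 1).mono (Finset.coe_subset.2 hL)),
    Finset.sum_image ((evenHom_neg_natCast_injOn_range n 2).mono (Finset.coe_subset.2 hL))]

variable [NeZero n]

lemma sum_omChar_neg_eq {L : Finset ℕ} (hL : L ⊆ Finset.range n)
    (hSL : (L.image (fun l => aU n ^ (2 * l)))⁻¹ = L.image (fun l => aU n ^ (2 * l))) (k : ℕ) :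
    ∑ l ∈ L, omChar n k (2 * ((-l : ℤ) : ZMod (2 * n))) = ∑ l ∈ L, om n ^ (2 * k * l) := by
  have h := congrArg (∑ g ∈ ·, psi n k g) hSL
  simp only [Finset.inv_def, Finset.image_image, Function.comp_def, aU_pow_two_mul, ← map_inv,
    ← ofAdd_neg, Prod.neg_mk, neg_zero] at h
  rw [Finset.sum_image ((evenHom_neg_natCast_injOn_range n 0).mono (Finset.coe_subset.2 hL)),
    Finset.sum_image ((evenHom_natCast_injOn_range n 0).mono (Finset.coe_subset.2 hL))] at h
  simp only [psi_evenHom, if_pos, ← Finset.mul_sum, Int.cast_natCast, omChar_two_mul_natCast] at h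
  exact mul_left_cancel₀ two_ne_zero h

lemma fsum_psi_connectionSet {R L : Finset ℕ} (hR : R ⊆ Finset.range n)
    (hL : L ⊆ Finset.range n)
    (hSL : (L.image (fun l => aU n ^ (2 * l)))⁻¹ = L.image (fun l => aU n ^ (2 * l))) (k : ℕ) :
    fsum (psi n k) (connectionSet n R L) =
      2 * (∑ r ∈ R, om n ^ (2 * k * r) - ∑ l ∈ L, om n ^ (2 * k * l)) := by
  rw [fsum, sum_connectionSet n hR hL]
  simp +decide only [psi_evenHom, Int.cast_natCast, omChar_two_mul_natCast, ← Finset.mul_sum,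
    sum_omChar_neg_eq n hL hSL, if_true, if_false]
  ring

lemma fsum2_psi_connectionSet {R L : Finset ℕ} (hR : R ⊆ Finset.range n)
    (hL : L ⊆ Finset.range n)
    (hSL : (L.image (fun l => aU n ^ (2 * l)))⁻¹ = L.image (fun l => aU n ^ (2 * l))) (k : ℕ) :
    fsum2 (psi n k) (connectionSet n R L) =
      2 * (∑ r ∈ R, om n ^ (2 * k * r) - ∑ l ∈ L, om n ^ (2 * k * l)) ^ 2 := by
  rw [fsum2, sum_connectionSet n hR hL]
  simp +decide only [sum_connectionSet n hR hL, psi_evenHom_mul, Int.cast_natCast,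
    omChar_two_mul_natCast, Finset.sum_add_distrib, ← Finset.mul_sum, ← Finset.sum_mul,
    sum_omChar_neg_eq n hL hSL, if_true, if_false]
  ring

end ConnectionSet

theorem psi_sum_eqs_general (n : ℕ) [NeZero n] (R L : Finset ℕ)
    (hR : R ⊆ Finset.range n) (hL : L ⊆ Finset.range n) (S₁ : Finset (U6n n))
    (hS₁ : S₁ = R.image (fun r => aU n ^ (2 * r)) ∪
      (L.image (fun l => aU n ^ (2 * l) * bU n) ∪
       L.image (fun l => (aU n ^ (2 * l))⁻¹ * bU n ^ 2)))
    (hSL : (L.image (fun l => aU n ^ (2 * l)))⁻¹ = L.image (fun l => aU n ^ (2 * l)))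
    (k : ℕ) :
    fsum (psi n k) S₁ = 2 * (∑ r ∈ R, om n ^ (2 * k * r) - ∑ l ∈ L, om n ^ (2 * k * l)) ∧
    fsum2 (psi n k) S₁ =
      2 * (∑ r ∈ R, om n ^ (2 * k * r) - ∑ l ∈ L, om n ^ (2 * k * l)) ^ 2 := by
  subst hS₁
  exact ⟨fsum_psi_connectionSet n hR hL hSL k, fsum2_psi_connectionSet n hR hL hSL k⟩

/-- Equations (4) and (6): for `S₁ = {a^{2r} : r ∈ R} ∪ {a^{2l}b, a^{-2l}b² : l ∈ L}` with
`S_L = S_L⁻¹`, one has `ψ_k(S₁) = 2(ρ_k(S_R) - ρ_k(S_L))` and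
`ψ_k(S₁²) = 2(ρ_k(S_R) - ρ_k(S_L))²` for all `0 ≤ k ≤ n-1`. -/
theorem psi_sum_eqs (n : ℕ) [NeZero n] (R L : Finset ℕ)
    (hR : R ⊆ Finset.range n) (hL : L ⊆ Finset.range n) (S₁ : Finset (U6n n))
    (hS₁ : S₁ = R.image (fun r => aU n ^ (2 * r)) ∪
      (L.image (fun l => aU n ^ (2 * l) * bU n) ∪
       L.image (fun l => (aU n ^ (2 * l))⁻¹ * bU n ^ 2)))
    (hSL : (L.image (fun l => aU n ^ (2 * l)))⁻¹ = L.image (fun l => aU n ^ (2 * l)))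
    (k : ℕ) (hk : k ≤ n - 1) :
    fsum (psi n k) S₁ = 2 * (∑ r ∈ R, om n ^ (2 * k * r) - ∑ l ∈ L, om n ^ (2 * k * l)) ∧
    fsum2 (psi n k) S₁ =
      2 * (∑ r ∈ R, om n ^ (2 * k * r) - ∑ l ∈ L, om n ^ (2 * k * l)) ^ 2 :=
  psi_sum_eqs_general n R L hR hL S₁ hS₁ hSL k

end U6nPaper
end
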